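/- Quantum one-time pad: Let n ≥ 1 and let ρ be any 2^n × 2^n complex matrix (indexed by Fin n → Fin 2). Then the uniform average of ρ conjugated by all Pauli strings is the maximally mixed state: ∑_{h : Fin n → Fin 4} P_h · ρ · (P_h)ᴴ = 2^n · (trace ρ) · 1, where 1 is the 2^n × 2^n identity matrix. In particular, if ρ has trace 1, the average (1/4^n) ∑_h P_h ρ (P_h)ᴴ equals (1/2^n) · 1. -/
import Mathlib


open Matrix Finset

/-- The four single-qubit Pauli matrices: identity, X, Y, Z. -/
noncomputable def pauli : Fin 4 → Matrix (Fin 2) (Fin 2) ℂ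
  | 0 => 1
  | 1 => !![0, 1; 1, 0]
  | 2 => !![0, -Complex.I; Complex.I, 0]
  | 3 => !![1, 0; 0, -1]

/-- The `n`-qubit Pauli string associated to `f : Fin n → Fin 4`. -/
noncomputable def PauliString (n : ℕ) (f : Fin n → Fin 4) :
    Matrix (Fin n → Fin 2) (Fin n → Fin 2) ℂ :=
  fun x y => ∏ i, pauli (f i) (x i) (y i)

lemma pauli_single (a b c d : Fin 2) :
    ∑ k : Fin 4, pauli k a b * (starRingEnd ℂ) (pauli k c d)
      = 2 * (if a = c then 1 else 0) * (if b = d then 1 else 0) := by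
  fin_cases a <;> fin_cases b <;> fin_cases c <;> fin_cases d <;>
    simp [pauli, Fin.sum_univ_four, Matrix.one_apply, Complex.ext_iff] <;> norm_num

lemma pauli_sum (n : ℕ) (x y u v : Fin n → Fin 2) :
    ∑ h : Fin n → Fin 4,
        ∏ i, pauli (h i) (x i) (u i) * (starRingEnd ℂ) (pauli (h i) (y i) (v i))
      = (2:ℂ)^n * (if x = y then 1 else 0) * (if u = v then 1 else 0) := by
  rw [← Fintype.piFinset_univ, Finset.sum_prod_piFinset (univ : Finset (Fin 4))
    (fun i k => pauli k (x i) (u i) * (starRingEnd ℂ) (pauli k (y i) (v i)))]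
  calc (∏ i, ∑ k : Fin 4, pauli k (x i) (u i) * (starRingEnd ℂ) (pauli k (y i) (v i)))
      = ∏ i, (2 * (if x i = y i then 1 else 0) * (if u i = v i then (1:ℂ) else 0)) :=
        Finset.prod_congr rfl fun i _ => pauli_single _ _ _ _
    _ = _ := by
        simp only [Finset.prod_mul_distrib, Finset.prod_boole, Finset.prod_const,
          Finset.card_univ, Fintype.card_fin]
        congr 1
        · congr 1
          simp [funext_iff]
        · simp [funext_iff]

/-- **Quantum one-time pad**: the sum of `ρ` conjugated by all `4^n` Pauli strings
equals `2^n · tr(ρ) · 1`; in particular, if `tr ρ = 1`, the uniform average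
`(1/4^n) ∑_h P_h ρ P_h†` is the maximally mixed state `(1/2^n) · 1`. -/
theorem quantum_one_time_pad (n : ℕ) (hn : 1 ≤ n)
    (ρ : Matrix (Fin n → Fin 2) (Fin n → Fin 2) ℂ) :
    (∑ h : Fin n → Fin 4, PauliString n h * ρ * (PauliString n h)ᴴ
        = ((2 : ℂ) ^ n * Matrix.trace ρ) •
            (1 : Matrix (Fin n → Fin 2) (Fin n → Fin 2) ℂ)) ∧
    (Matrix.trace ρ = 1 →
      ((4 : ℂ) ^ n)⁻¹ • ∑ h : Fin n → Fin 4,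
          PauliString n h * ρ * (PauliString n h)ᴴ
        = ((2 : ℂ) ^ n)⁻¹ • (1 : Matrix (Fin n → Fin 2) (Fin n → Fin 2) ℂ)) := by
  have key : ∑ h : Fin n → Fin 4, PauliString n h * ρ * (PauliString n h)ᴴ
      = ((2 : ℂ) ^ n * Matrix.trace ρ) • 1 := by
    ext x y
    calc (∑ h : Fin n → Fin 4, PauliString n h * ρ * (PauliString n h)ᴴ) x y
        = ∑ h : Fin n → Fin 4, ∑ v, ∑ u, (∏ i, pauli (h i) (x i) (u i)) * ρ u v *
            (starRingEnd ℂ) (∏ i, pauli (h i) (y i) (v i)) := by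
          simp [Matrix.sum_apply, Matrix.mul_apply, Matrix.conjTranspose_apply,
            PauliString, Finset.sum_mul]
      _ = ∑ v, ∑ u, ρ u v * ∑ h : Fin n → Fin 4,
            ∏ i, pauli (h i) (x i) (u i) * (starRingEnd ℂ) (pauli (h i) (y i) (v i)) := by
          rw [Finset.sum_comm]
          refine Finset.sum_congr rfl fun v _ => ?_
          rw [Finset.sum_comm]
          refine Finset.sum_congr rfl fun u _ => ?_
          rw [Finset.mul_sum]
          refine Finset.sum_congr rfl fun h _ => ?_
          rw [map_prod, Finset.prod_mul_distrib]
          ring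
      _ = (((2 : ℂ) ^ n * Matrix.trace ρ) •
            (1 : Matrix (Fin n → Fin 2) (Fin n → Fin 2) ℂ)) x y := by
          simp only [pauli_sum]
          by_cases hxy : x = y
          · simp only [hxy, if_pos rfl, mul_one, Matrix.smul_apply, Matrix.one_apply_eq,
              smul_eq_mul, mul_ite, mul_zero, Finset.sum_ite_eq', Finset.mem_univ, if_pos]
            rw [Matrix.trace]
            simp [Finset.mul_sum, mul_comm]
          · simp [hxy, Matrix.one_apply]
  refine ⟨key, fun htr => ?_⟩
  rw [key, htr, mul_one, smul_smul]
  congr 1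
  have h2 : (2:ℂ)^n ≠ 0 := pow_ne_zero _ two_ne_zero
  rw [show (4:ℂ) = 2 * 2 by norm_num, mul_pow]
  field_simp
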